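/- arXiv:1210.7621 — 2 statements merged into one kernel-verified Lean document; each statement's English description precedes it below -/
import Mathlib

section
/- For any hypergraph H on d+1 colour classes of d+1 points (d ≥ 1) and any colourful edge e, adding e to H (if e ∉ H) or deleting e from H (if e ∈ H) changes the score of the hypergraph by at most d^{z(e)}, where z(e) is the number of coordinates of e equal to 0. -/
namespace ColourfulDepth

/-- A colourful edge on `d+1` colour classes, each a copy of `Fin (d+1)`:
`e i` is the chosen point of colour `i`. -/
abbrev Edge (d : ℕ) := Fin (d + 1) → Fin (d + 1)

/-- The number of edges of `H` using points from the `î`-octahedron `{t, t'}`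
with `i`-th coordinate `s`. -/
def usesCount (d : ℕ) (H : Finset (Edge d)) (i : Fin (d + 1)) (t t' : Edge d)
    (s : Fin (d + 1)) : ℕ :=
  (H.filter (fun e => e i = s ∧ ∀ j, j ≠ i → (e j = t j ∨ e j = t' j))).card

/-- `H` is an octahedral system: for every colour `i`, every `î`-octahedron
`{t, t'}` (a pair of `î`-transversals with `t j ≠ t' j` for all `j ≠ i`), and
all `s, s'`, the numbers of edges using points from the octahedron with `i`-th
coordinate `s` resp. `s'` have the same parity. -/
def IsOctahedralSystem (d : ℕ) (H : Finset (Edge d)) : Prop :=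
  ∀ i : Fin (d + 1), ∀ t t' : Edge d, (∀ j, j ≠ i → t j ≠ t' j) →
    ∀ s s' : Fin (d + 1),
      usesCount d H i t t' s % 2 = usesCount d H i t t' s' % 2

/-- `H` has no isolated vertex: every point of every colour lies in some edge. -/
def NoIsolatedVertex (d : ℕ) (H : Finset (Edge d)) : Prop :=
  ∀ i p : Fin (d + 1), ∃ e ∈ H, e i = p

/-- The entry `T_H(t, x)` of the large table: the parity of the number of edges
`e ∈ H` with `e 0 = x` and `e j ∈ {0, t j}` for all `j ≠ 0`. -/
def tableEntry (d : ℕ) (H : Finset (Edge d)) (t : Edge d) (x : Fin (d + 1)) : ZMod 2 :=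
  ((H.filter (fun e => e 0 = x ∧ ∀ j, j ≠ 0 → (e j = 0 ∨ e j = t j))).card : ZMod 2)

/-- The score of `H`: the number of pairs `(t, x)` where `t` is a
`0̂`-transversal disjoint from `t₀ = (∗,0,…,0)` (normalized by `t 0 = 0`),
`x ≠ 0`, and the entry `T_H(t, x)` disagrees with `T_H(t, 0)`. -/
def score (d : ℕ) (H : Finset (Edge d)) : ℕ :=
  (Finset.univ.filter (fun p : Edge d × Fin (d + 1) =>
    p.1 0 = 0 ∧ (∀ j, j ≠ 0 → p.1 j ≠ 0) ∧ p.2 ≠ 0 ∧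
      tableEntry d H p.1 p.2 ≠ tableEntry d H p.1 0)).card

/-- `z(e)`: the number of coordinates of `e` equal to `0`. -/
def zcount (d : ℕ) (e : Edge d) : ℕ :=
  (Finset.univ.filter (fun i : Fin (d + 1) => e i = 0)).card

end ColourfulDepth

open ColourfulDepth Finset in
private lemma tableEntry_insert_ne {d : ℕ} {H : Finset (Edge d)} {e : Edge d}
    {t : Edge d} {x : Fin (d + 1)}
    (h : tableEntry d (insert e H) t x ≠ tableEntry d H t x) :
    e 0 = x ∧ ∀ j, j ≠ 0 → (e j = 0 ∨ e j = t j) := by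
  by_contra hc
  exact h (by unfold tableEntry; rw [Finset.filter_insert, if_neg hc])

open ColourfulDepth Finset in
private lemma score_insert_le (d : ℕ) (hd : 1 ≤ d) (H : Finset (Edge d)) (e : Edge d)
    (he : e ∉ H) :
    |(score d (insert e H) : ℤ) - (score d H : ℤ)| ≤ (d : ℤ) ^ zcount d e := by
  classical
  set A : Finset (Edge d × Fin (d + 1)) :=
    Finset.univ.filter (fun p : Edge d × Fin (d + 1) =>
      p.1 0 = 0 ∧ (∀ j, j ≠ 0 → p.1 j ≠ 0) ∧ p.2 ≠ 0 ∧
        tableEntry d (insert e H) p.1 p.2 ≠ tableEntry d (insert e H) p.1 0) with hA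
  set B : Finset (Edge d × Fin (d + 1)) :=
    Finset.univ.filter (fun p : Edge d × Fin (d + 1) =>
      p.1 0 = 0 ∧ (∀ j, j ≠ 0 → p.1 j ≠ 0) ∧ p.2 ≠ 0 ∧
        tableEntry d H p.1 p.2 ≠ tableEntry d H p.1 0) with hB
  have hsA : score d (insert e H) = A.card := rfl
  have hsB : score d H = B.card := rfl
  set T : Finset (Edge d) := Finset.univ.filter (fun t : Edge d =>
    t 0 = 0 ∧ (∀ j, j ≠ 0 → t j ≠ 0) ∧ ∀ j, j ≠ 0 → (e j = 0 ∨ e j = t j)) with hT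
  set X : Finset (Fin (d + 1)) := Finset.univ.filter
    (fun x : Fin (d + 1) => x ≠ 0 ∧ (e 0 = x ∨ e 0 = 0)) with hX
  set D : Finset (Edge d × Fin (d + 1)) := T ×ˢ X with hD
  -- symmetric difference is contained in D
  have helper : ∀ p : Edge d × Fin (d + 1), p.1 0 = 0 → (∀ j, j ≠ 0 → p.1 j ≠ 0) →
      p.2 ≠ 0 →
      (tableEntry d (insert e H) p.1 p.2 ≠ tableEntry d H p.1 p.2 ∨
        tableEntry d (insert e H) p.1 0 ≠ tableEntry d H p.1 0) → p ∈ D := by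
    intro p h1 h2 h3 h4
    rw [hD, Finset.mem_product]
    rcases h4 with h4 | h4
    · obtain ⟨hx, ht⟩ := tableEntry_insert_ne h4
      exact ⟨Finset.mem_filter.2 ⟨Finset.mem_univ _, h1, h2, ht⟩,
        Finset.mem_filter.2 ⟨Finset.mem_univ _, h3, Or.inl hx⟩⟩
    · obtain ⟨hx, ht⟩ := tableEntry_insert_ne h4
      exact ⟨Finset.mem_filter.2 ⟨Finset.mem_univ _, h1, h2, ht⟩,
        Finset.mem_filter.2 ⟨Finset.mem_univ _, h3, Or.inr hx⟩⟩
  have hAB : A \ B ⊆ D := by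
    intro p hp
    rw [Finset.mem_sdiff] at hp
    obtain ⟨hpA, hpB⟩ := hp
    rw [hA, Finset.mem_filter] at hpA
    obtain ⟨-, h1, h2, h3, h4⟩ := hpA
    refine helper p h1 h2 h3 ?_
    by_contra hc
    push_neg at hc
    apply hpB
    rw [hB, Finset.mem_filter]
    refine ⟨Finset.mem_univ _, h1, h2, h3, ?_⟩
    rw [← hc.1, ← hc.2]; exact h4
  have hBA : B \ A ⊆ D := by
    intro p hp
    rw [Finset.mem_sdiff] at hp
    obtain ⟨hpB, hpA⟩ := hp
    rw [hB, Finset.mem_filter] at hpB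
    obtain ⟨-, h1, h2, h3, h4⟩ := hpB
    refine helper p h1 h2 h3 ?_
    by_contra hc
    push_neg at hc
    apply hpA
    rw [hA, Finset.mem_filter]
    refine ⟨Finset.mem_univ _, h1, h2, h3, ?_⟩
    rw [hc.1, hc.2]; exact h4
  -- |#A - #B| ≤ #D
  have hAcard : A.card ≤ B.card + D.card := by
    calc A.card ≤ (B ∪ (A \ B)).card := Finset.card_le_card (by
          intro p hp
          by_cases hpb : p ∈ B
          · exact Finset.mem_union_left _ hpb
          · exact Finset.mem_union_right _ (Finset.mem_sdiff.2 ⟨hp, hpb⟩))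
      _ ≤ B.card + (A \ B).card := Finset.card_union_le _ _
      _ ≤ B.card + D.card := by
          exact Nat.add_le_add_left (Finset.card_le_card hAB) _
  have hBcard : B.card ≤ A.card + D.card := by
    calc B.card ≤ (A ∪ (B \ A)).card := Finset.card_le_card (by
          intro p hp
          by_cases hpa : p ∈ A
          · exact Finset.mem_union_left _ hpa
          · exact Finset.mem_union_right _ (Finset.mem_sdiff.2 ⟨hp, hpa⟩))
      _ ≤ A.card + (B \ A).card := Finset.card_union_le _ _
      _ ≤ A.card + D.card := Nat.add_le_add_left (Finset.card_le_card hBA) _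
  -- count T
  set k : ℕ := (Finset.univ.filter (fun i : Fin (d + 1) => i ≠ 0 ∧ e i = 0)).card with hk
  have hTcard : T.card ≤ d ^ k := by
    set F : Fin (d + 1) → Finset (Fin (d + 1)) := fun i =>
      if i = 0 then ({0} : Finset (Fin (d + 1)))
      else if e i = 0 then Finset.univ \ {0} else {e i} with hF
    have hsub : T ⊆ Fintype.piFinset F := by
      intro t ht
      rw [hT, Finset.mem_filter] at ht
      obtain ⟨-, h1, h2, h3⟩ := ht
      rw [Fintype.mem_piFinset]
      intro i
      by_cases hi0 : i = 0
      · simp [hF, hi0, h1]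
      · by_cases hei : e i = 0
        · simp [hF, hi0, hei, h2 i hi0]
        · rcases h3 i hi0 with h | h
          · exact absurd h hei
          · simp [hF, hi0, hei, h.symm]
    have hc := Finset.card_le_card hsub
    rw [Fintype.card_piFinset] at hc
    have hprod : (∏ i, (F i).card) = d ^ k := by
      rw [← Finset.prod_filter_mul_prod_filter_not Finset.univ
        (fun i : Fin (d + 1) => i ≠ 0 ∧ e i = 0)]
      have h1 : ∏ i ∈ Finset.univ.filter (fun i : Fin (d + 1) => i ≠ 0 ∧ e i = 0),
          (F i).card = d ^ k := by
        rw [Finset.prod_congr rfl (fun i hi => ?_), Finset.prod_const, hk]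
        rw [Finset.mem_filter] at hi
        rw [hF]
        simp only [if_neg hi.2.1, if_pos hi.2.2]
        rw [Finset.card_sdiff_of_subset (by simp), Finset.card_univ, Finset.card_singleton]
        simp
      have h2 : ∏ i ∈ Finset.univ.filter (fun i : Fin (d + 1) => ¬(i ≠ 0 ∧ e i = 0)),
          (F i).card = 1 := by
        apply Finset.prod_eq_one
        intro i hi
        rw [Finset.mem_filter] at hi
        rw [hF]
        by_cases hi0 : i = 0
        · simp [hi0]
        · have : e i ≠ 0 := fun h => hi.2 ⟨hi0, h⟩
          simp [hi0, this]
      rw [h1, h2, mul_one]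
    rw [hprod] at hc
    exact hc
  -- the final counting, split on whether e 0 = 0
  have hDfinal : D.card ≤ d ^ zcount d e := by
    rw [hD, Finset.card_product]
    by_cases he0 : e 0 = 0
    · have hz : zcount d e = k + 1 := by
        unfold zcount
        have : (Finset.univ.filter (fun i : Fin (d + 1) => e i = 0)) =
            insert 0 (Finset.univ.filter (fun i : Fin (d + 1) => i ≠ 0 ∧ e i = 0)) := by
          ext i
          simp only [Finset.mem_filter, Finset.mem_insert, Finset.mem_univ, true_and]
          constructor
          · intro h
            by_cases hi0 : i = 0
            · exact Or.inl hi0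
            · exact Or.inr ⟨hi0, h⟩
          · rintro (h | h)
            · rw [h]; exact he0
            · exact h.2
        rw [this, Finset.card_insert_of_notMem (by simp), hk]
      have hXcard : X.card ≤ d := by
        have : X ⊆ Finset.univ.erase 0 := by
          intro x hx
          rw [hX, Finset.mem_filter] at hx
          exact Finset.mem_erase.2 ⟨hx.2.1, Finset.mem_univ _⟩
        calc X.card ≤ (Finset.univ.erase (0 : Fin (d + 1))).card := Finset.card_le_card this
          _ = d := by simp
      calc T.card * X.card ≤ d ^ k * d := Nat.mul_le_mul hTcard hXcard
        _ = d ^ zcount d e := by rw [hz, pow_succ]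
    · have hz : zcount d e = k := by
        unfold zcount
        rw [hk]
        congr 1
        ext i
        simp only [Finset.mem_filter, Finset.mem_univ, true_and]
        constructor
        · intro h
          exact ⟨fun hi0 => he0 (hi0 ▸ h), h⟩
        · exact fun h => h.2
      have hXcard : X.card ≤ 1 := by
        have : X ⊆ {e 0} := by
          intro x hx
          rw [hX, Finset.mem_filter] at hx
          rcases hx.2.2 with h | h
          · exact Finset.mem_singleton.2 h.symm
          · exact absurd h he0
        calc X.card ≤ ({e 0} : Finset (Fin (d + 1))).card := Finset.card_le_card this
          _ = 1 := Finset.card_singleton _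
      calc T.card * X.card ≤ d ^ k * 1 := Nat.mul_le_mul hTcard hXcard
        _ = d ^ zcount d e := by rw [hz, mul_one]
  rw [hsA, hsB, abs_sub_le_iff]
  constructor
  · have : (A.card : ℤ) ≤ (B.card : ℤ) + (D.card : ℤ) := by exact_mod_cast hAcard
    have h2 : (D.card : ℤ) ≤ (d : ℤ) ^ zcount d e := by exact_mod_cast hDfinal
    linarith
  · have : (B.card : ℤ) ≤ (A.card : ℤ) + (D.card : ℤ) := by exact_mod_cast hBcard
    have h2 : (D.card : ℤ) ≤ (d : ℤ) ^ zcount d e := by exact_mod_cast hDfinal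
    linarith

open ColourfulDepth in
/-- Adding an edge `e` to a hypergraph `H` (if `e ∉ H`), or deleting it
(if `e ∈ H`), changes the score of the hypergraph by at most `d ^ z(e)`,
where `z(e)` is the number of coordinates of `e` equal to `0`. -/
theorem score_change_le (d : ℕ) (hd : 1 ≤ d) (H : Finset (Edge d)) (e : Edge d) :
    (e ∉ H →
      |(score d (insert e H) : ℤ) - (score d H : ℤ)| ≤ (d : ℤ) ^ zcount d e) ∧
    (e ∈ H →
      |(score d (H.erase e) : ℤ) - (score d H : ℤ)| ≤ (d : ℤ) ^ zcount d e) := by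
  refine ⟨fun he => score_insert_le d hd H e he, fun he => ?_⟩
  have h1 : e ∉ H.erase e := Finset.notMem_erase e H
  have h2 : insert e (H.erase e) = H := Finset.insert_erase he
  have h3 := score_insert_le d hd (H.erase e) e h1
  rw [h2] at h3
  rwa [abs_sub_comm]
end

section
/- Let d ≥ 1 and let H be an octahedral system on d+1 colour classes of d+1 points each. If H contains an isolated edge, i.e. an edge e ∈ H such that no other edge e' ∈ H differs from e in exactly one coordinate, then H has at least d^2 + 1 edges. Equivalently, an octahedral system with d^2 or fewer edges contains no isolated edge. -/
open Finset

section Agreement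

variable {ι α : Type*} [Fintype ι] [DecidableEq α]

lemma card_filter_eq_add_two_le {f e : ι → α} (hne : f ≠ e) (h : #{i | f i ≠ e i} ≠ 1) :
    #{i | f i = e i} + 2 ≤ Fintype.card ι := by
  have h0 : #{i | f i ≠ e i} ≠ 0 := by
    rw [Ne, card_eq_zero, filter_eq_empty_iff]
    exact fun hall => hne (funext fun i => not_not.1 (hall (mem_univ i)))
  have hsplit := card_filter_add_card_filter_not (s := univ) (fun i => f i = e i)
  simp only [card_univ, ← ne_eq] at hsplit
  omega

end Agreement

section Covering

variable {ι α : Type*} [Fintype ι] [DecidableEq ι] [Fintype α] [DecidableEq α]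

lemma card_piFinset_erase (e : ι → α) :
    #(Fintype.piFinset fun j => univ.erase (e j)) = (Fintype.card α - 1) ^ Fintype.card ι := by
  simp [Fintype.card_piFinset, card_erase_of_mem]

lemma card_filter_piFinset_erase_le (e f : ι → α) :
    #{c ∈ Fintype.piFinset (fun j => univ.erase (e j)) | ∀ j, f j = e j ∨ f j = c j}
      ≤ (Fintype.card α - 1) ^ #{j | f j = e j} := by
  calc _ ≤ #(Fintype.piFinset fun j => if f j = e j then univ.erase (e j) else {f j}) := by
        refine card_le_card fun c hc => ?_
        simp only [mem_filter, Fintype.mem_piFinset] at hc ⊢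
        intro j
        split_ifs with hj
        · exact hc.1 j
        · exact mem_singleton.2 ((hc.2 j).resolve_left hj).symm
    _ = (Fintype.card α - 1) ^ #{j | f j = e j} := by
        simp only [Fintype.card_piFinset, apply_ite card, card_erase_of_mem (mem_univ _), card_univ,
          card_singleton]
        rw [prod_ite, prod_const, prod_const, one_pow, mul_one]

lemma pow_card_le_sum_pow_card_agree (e : ι → α) (F : Finset (ι → α))
    (hcover : ∀ c : ι → α, (∀ j, c j ≠ e j) → ∃ f ∈ F, ∀ j, f j = e j ∨ f j = c j) :
    (Fintype.card α - 1) ^ Fintype.card ι ≤ ∑ f ∈ F, (Fintype.card α - 1) ^ #{j | f j = e j} := by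
  rw [← card_piFinset_erase e]
  calc _ ≤ #(F.biUnion fun f =>
          {c ∈ Fintype.piFinset (fun j => univ.erase (e j)) | ∀ j, f j = e j ∨ f j = c j}) := by
        refine card_le_card fun c hc => ?_
        have hce : ∀ j, c j ≠ e j := fun j => (mem_erase.1 (Fintype.mem_piFinset.1 hc j)).1
        obtain ⟨f, hf, hfc⟩ := hcover c hce
        exact mem_biUnion.2 ⟨f, hf, mem_filter.2 ⟨hc, hfc⟩⟩
    _ ≤ _ := card_biUnion_le
    _ ≤ _ := sum_le_sum fun f _ => card_filter_piFinset_erase_le e f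

end Covering

namespace ColourfulDepth

lemma exists_mem_erase_of_isOctahedralSystem {d : ℕ} {H : Finset (Edge d)}
    (hoct : IsOctahedralSystem d H) {e : Edge d} (he : e ∈ H) (c : Edge d)
    (hc : ∀ j, c j ≠ e j) : ∃ f ∈ H.erase e, ∀ j, f j = e j ∨ f j = c j := by
  by_contra! hnone
  have hparity := hoct 0 e c (fun j _ => (hc j).symm) (c 0) (e 0)
  have hzeroth : ∀ f ∈ H, f ≠ e → (∀ j, j ≠ 0 → f j = e j ∨ f j = c j) →
      f 0 ≠ e 0 ∧ f 0 ≠ c 0 := by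
    intro f hfH hfe hfj
    obtain ⟨j, hje, hjc⟩ := hnone f (mem_erase.2 ⟨hfe, hfH⟩)
    by_cases hj : j = 0
    · exact hj ▸ ⟨hje, hjc⟩
    · exact ((hfj j hj).elim hje hjc).elim
  have hcount_c : usesCount d H 0 e c (c 0) = 0 := by
    rw [usesCount, card_eq_zero, filter_eq_empty_iff]
    rintro f hfH ⟨hf0, hfj⟩
    have hfe : f ≠ e := fun hfe => hc 0 (hfe ▸ hf0).symm
    exact (hzeroth f hfH hfe hfj).2 hf0
  have hcount_e : usesCount d H 0 e c (e 0) = 1 := by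
    rw [usesCount, card_eq_one]
    refine ⟨e, eq_singleton_iff_unique_mem.2 ⟨mem_filter.2 ⟨he, rfl, fun j _ => Or.inl rfl⟩, ?_⟩⟩
    rintro f hf
    obtain ⟨hfH, hf0, hfj⟩ := mem_filter.1 hf
    by_contra hfe
    exact (hzeroth f hfH hfe hfj).1 hf0
  simp [hcount_c, hcount_e] at hparity

end ColourfulDepth

open ColourfulDepth in
/-- An octahedral system containing an isolated edge — an edge `e ∈ H` such
that no other edge of `H` differs from `e` in exactly one coordinate — has at
least `d² + 1` edges.  Equivalently, an octahedral system with `d²` or fewer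
edges contains no isolated edge. -/
theorem octahedral_system_isolated_edge_card (d : ℕ) (hd : 1 ≤ d)
    (H : Finset (Edge d)) (hoct : IsOctahedralSystem d H)
    (e : Edge d) (he : e ∈ H)
    (hiso : ∀ e' ∈ H, e' ≠ e →
      (Finset.univ.filter (fun i : Fin (d + 1) => e' i ≠ e i)).card ≠ 1) :
    d ^ 2 + 1 ≤ H.card := by
  have hcount := pow_card_le_sum_pow_card_agree e (H.erase e)
    (exists_mem_erase_of_isOctahedralSystem hoct he)
  simp only [Fintype.card_fin, add_tsub_cancel_right] at hcount
  have hsum : ∑ f ∈ H.erase e, d ^ #{j | f j = e j} ≤ #(H.erase e) * d ^ (d - 1) := by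
    refine sum_le_card_nsmul _ _ _ fun f hf => Nat.pow_le_pow_right hd ?_
    obtain ⟨hfe, hfH⟩ := mem_erase.1 hf
    have := card_filter_eq_add_two_le hfe (hiso f hfH hfe)
    rw [Fintype.card_fin] at this
    omega
  have hmul : d ^ 2 * d ^ (d - 1) ≤ #(H.erase e) * d ^ (d - 1) := by
    rw [← pow_add, show 2 + (d - 1) = d + 1 by omega]
    exact hcount.trans hsum
  have hle := Nat.le_of_mul_le_mul_right hmul (by positivity)
  rw [card_erase_of_mem he] at hle
  have := card_pos.2 ⟨e, he⟩
  omega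
end
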